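/- arXiv:1109.0187 — 2 statements merged into one kernel-verified Lean document; each statement's English description precedes it below -/
import Mathlib

section
/- For proper open convex sets A ⊆ R^n and B ⊆ R^m, for every p = (p_A, p_B) ∈ A × B, every R > 0 and every ε ∈ (0,1), the product of Hilbert balls B_A(p_A, εR) × B_B(p_B, (1−ε)R) is contained in the Hilbert ball B_{A×B}(p, R). -/
open scoped ENNReal
open MeasureTheory

noncomputable section

/-- Exit time of the open convex set `A` from `p` in direction `v`:
`sup {t > 0 : p + t • v ∈ A}` in `ℝ≥0∞` (so it is `∞` when the ray stays in `A`). -/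
def exitTime {V : Type*} [AddCommGroup V] [Module ℝ V] (A : Set V) (p v : V) : ℝ≥0∞ :=
  ⨆ t ∈ {t : ℝ | 0 < t ∧ p + t • v ∈ A}, ENNReal.ofReal t

/-- The Hilbert–Finsler norm `F_A(p,v) = (1/2)(1/t⁺ + 1/t⁻)`, with `1/∞ = 0`. -/
def finsler {V : Type*} [AddCommGroup V] [Module ℝ V] (A : Set V) (p v : V) : ℝ :=
  ((exitTime A p v)⁻¹ + (exitTime A p (-v))⁻¹).toReal / 2

/-- `A` contains no affine line (properness). -/
def LineFree {V : Type*} [AddCommGroup V] [Module ℝ V] (A : Set V) : Prop :=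
  ¬ ∃ p v : V, v ≠ 0 ∧ ∀ t : ℝ, p + t • v ∈ A

open Classical in
/-- The Hilbert distance of `A`, written via the exit times `t⁺ = exitTime A p (q-p)`,
`t⁻ = exitTime A p (p-q)`: the cross-ratio of `(a,p,q,b)` equals
`(t⁺/(t⁺-1)) · ((t⁻+1)/t⁻)`, factors involving a boundary point at infinity being `1`. -/
def hilbertDist {V : Type*} [AddCommGroup V] [Module ℝ V] (A : Set V) (p q : V) : ℝ :=
  if p = q then 0 else
    (1 / 2) * Real.log
      ((if exitTime A p (q - p) = ∞ then 1 else
          (exitTime A p (q - p)).toReal / ((exitTime A p (q - p)).toReal - 1)) *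
       (if exitTime A p (p - q) = ∞ then 1 else
          ((exitTime A p (p - q)).toReal + 1) / (exitTime A p (p - q)).toReal))

/-- Open ball of the Hilbert distance. -/
def hilbertBall {V : Type*} [AddCommGroup V] [Module ℝ V] (A : Set V) (p : V) (R : ℝ) :
    Set V :=
  {q ∈ A | hilbertDist A p q < R}

/-!
Along every direction the exit time of `A ×ˢ B` from `p` is the minimum of the exit times of `A`
from `p.1` and of `B` from `p.2`, by convexity. Each of the two factors of the cross-ratio is at
least `1` (openness), and a function `f ≥ 1` satisfies `f (min a b) ≤ f a * f b`. So the
cross-ratio for `A ×ˢ B` is at most the product of those for `A` and `B`, which after taking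
logarithms is `d_{A×B}(p, q) ≤ d_A(p.1, q.1) + d_B(p.2, q.2)`; the radii `εR` and `(1 - ε)R`
then add up to `R`.
-/

open Classical in
def crossRatioFwd (e : ℝ≥0∞) : ℝ := if e = ∞ then 1 else e.toReal / (e.toReal - 1)

open Classical in
def crossRatioBwd (e : ℝ≥0∞) : ℝ := if e = ∞ then 1 else (e.toReal + 1) / e.toReal

def crossRatio {V : Type*} [AddCommGroup V] [Module ℝ V] (A : Set V) (p q : V) : ℝ :=
  crossRatioFwd (exitTime A p (q - p)) * crossRatioBwd (exitTime A p (p - q))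

lemma one_le_crossRatioFwd {e : ℝ≥0∞} (he : 1 < e) : 1 ≤ crossRatioFwd e := by
  unfold crossRatioFwd
  split_ifs with h
  · exact le_rfl
  · have h1 : 1 < e.toReal := by simpa using (ENNReal.toReal_lt_toReal ENNReal.one_ne_top h).mpr he
    rw [le_div_iff₀ (by linarith)]
    linarith

lemma one_le_crossRatioBwd {e : ℝ≥0∞} (he : 0 < e) : 1 ≤ crossRatioBwd e := by
  unfold crossRatioBwd
  split_ifs with h
  · exact le_rfl
  · rw [le_div_iff₀ (ENNReal.toReal_pos he.ne' h)]
    linarith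

lemma apply_min_le_mul {α : Type*} [LinearOrder α] {f : α → ℝ} {a b : α}
    (ha : 1 ≤ f a) (hb : 1 ≤ f b) : f (min a b) ≤ f a * f b := by
  rcases min_choice a b with h | h <;> rw [h]
  · exact le_mul_of_one_le_right (by linarith) hb
  · exact le_mul_of_one_le_left (by linarith) ha

section

variable {V W : Type*} [AddCommGroup V] [Module ℝ V] [AddCommGroup W] [Module ℝ W]

lemma ofReal_le_exitTime {A : Set V} {p v : V} {t : ℝ} (ht : 0 < t) (hmem : p + t • v ∈ A) :
    ENNReal.ofReal t ≤ exitTime A p v :=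
  le_iSup₂ (f := fun (t : ℝ) (_ : t ∈ {t : ℝ | 0 < t ∧ p + t • v ∈ A}) => ENNReal.ofReal t)
    t ⟨ht, hmem⟩

lemma exitTime_zero {A : Set V} {p : V} (hp : p ∈ A) : exitTime A p 0 = ∞ := by
  refine ENNReal.eq_top_of_forall_nnreal_le fun r => ?_
  calc (r : ℝ≥0∞) = ENNReal.ofReal r := ENNReal.ofReal_coe_nnreal.symm
    _ ≤ ENNReal.ofReal (r + 1) := ENNReal.ofReal_le_ofReal (by linarith)
    _ ≤ exitTime A p 0 := ofReal_le_exitTime (by positivity) (by simpa using hp)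

lemma Convex.add_smul_mem_of_ofReal_lt_exitTime {A : Set V} (hA : Convex ℝ A) {p v : V}
    (hp : p ∈ A) {r : ℝ} (hr : 0 < r) (hlt : ENNReal.ofReal r < exitTime A p v) :
    p + r • v ∈ A := by
  obtain ⟨t, ⟨ht, hmem⟩, hrt⟩ := by simpa only [exitTime, lt_iSup_iff, exists_prop] using hlt
  have hrt : r ≤ t := ((ENNReal.ofReal_lt_ofReal_iff ht).mp hrt).le
  have hscale : (r / t) • t • v = r • v := by rw [smul_smul, div_mul_cancel₀ _ ht.ne']
  rw [← hscale]
  exact hA.add_smul_mem hp hmem ⟨by positivity, (div_le_one ht).mpr hrt⟩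

lemma exitTime_prod {A : Set V} {B : Set W} (hA : Convex ℝ A) (hB : Convex ℝ B)
    {p : V × W} (hp : p ∈ A ×ˢ B) (v : V × W) :
    exitTime (A ×ˢ B) p v = min (exitTime A p.1 v.1) (exitTime B p.2 v.2) := by
  refine le_antisymm (le_min ?_ ?_) (le_of_forall_lt fun c hc => ?_)
  · exact iSup₂_le fun t ⟨ht, hmem⟩ => ofReal_le_exitTime ht hmem.1
  · exact iSup₂_le fun t ⟨ht, hmem⟩ => ofReal_le_exitTime ht hmem.2
  obtain ⟨r, -, hcr, hr⟩ := ENNReal.lt_iff_exists_real_btwn.mp hc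
  have hr0 : 0 < r := ENNReal.ofReal_pos.mp (pos_of_gt hcr)
  refine hcr.trans_le (ofReal_le_exitTime hr0 ⟨?_, ?_⟩)
  · exact hA.add_smul_mem_of_ofReal_lt_exitTime hp.1 hr0 (hr.trans_le (min_le_left _ _))
  · exact hB.add_smul_mem_of_ofReal_lt_exitTime hp.2 hr0 (hr.trans_le (min_le_right _ _))

lemma hilbertDist_eq_half_log_crossRatio {A : Set V} {p : V} (hp : p ∈ A) (q : V) :
    hilbertDist A p q = 1 / 2 * Real.log (crossRatio A p q) := by
  rw [hilbertDist, crossRatio, crossRatioFwd, crossRatioBwd]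
  by_cases h : p = q
  · subst h
    simp [exitTime_zero hp]
  · rw [if_neg h]

section

variable [TopologicalSpace V] [ContinuousAdd V] [ContinuousSMul ℝ V]
  [TopologicalSpace W] [ContinuousAdd W] [ContinuousSMul ℝ W]

lemma IsOpen.ofReal_lt_exitTime {A : Set V} (hA : IsOpen A) {p v : V} {s : ℝ} (hs : 0 ≤ s)
    (hmem : p + s • v ∈ A) : ENNReal.ofReal s < exitTime A p v := by
  have hline : Continuous fun t : ℝ => p + t • v := by fun_prop
  obtain ⟨u, hsu, hIco⟩ :=
    exists_Ico_subset_of_mem_nhds ((hA.preimage hline).mem_nhds hmem) ⟨s + 1, by linarith⟩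
  have hmid : (s + u) / 2 ∈ Set.Ico s u := ⟨by linarith, by linarith⟩
  calc ENNReal.ofReal s < ENNReal.ofReal ((s + u) / 2) :=
        (ENNReal.ofReal_lt_ofReal_iff (by linarith)).mpr (by linarith)
    _ ≤ exitTime A p v := ofReal_le_exitTime (by linarith) (hIco hmid)

lemma IsOpen.one_lt_exitTime {A : Set V} (hA : IsOpen A) {p v : V} (hmem : p + v ∈ A) :
    1 < exitTime A p v := by
  simpa using hA.ofReal_lt_exitTime zero_le_one (by simpa using hmem)

lemma IsOpen.exitTime_pos {A : Set V} (hA : IsOpen A) {p : V} (hp : p ∈ A) (v : V) :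
    0 < exitTime A p v := by
  simpa using hA.ofReal_lt_exitTime le_rfl (v := v) (by simpa using hp)

lemma IsOpen.one_le_crossRatioFwd {A : Set V} (hA : IsOpen A) {p q : V} (hq : q ∈ A) :
    1 ≤ crossRatioFwd (exitTime A p (q - p)) :=
  _root_.one_le_crossRatioFwd (hA.one_lt_exitTime (by simpa using hq))

lemma IsOpen.one_le_crossRatioBwd {A : Set V} (hA : IsOpen A) {p : V} (hp : p ∈ A) (q : V) :
    1 ≤ crossRatioBwd (exitTime A p (p - q)) :=
  _root_.one_le_crossRatioBwd (hA.exitTime_pos hp _)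

lemma IsOpen.one_le_crossRatio {A : Set V} (hA : IsOpen A) {p q : V} (hp : p ∈ A) (hq : q ∈ A) :
    1 ≤ crossRatio A p q :=
  one_le_mul_of_one_le_of_one_le (hA.one_le_crossRatioFwd hq) (hA.one_le_crossRatioBwd hp q)

lemma crossRatio_prod_le {A : Set V} {B : Set W} (hAo : IsOpen A) (hAc : Convex ℝ A)
    (hBo : IsOpen B) (hBc : Convex ℝ B) {p q : V × W} (hp : p ∈ A ×ˢ B) (hq : q ∈ A ×ˢ B) :
    crossRatio (A ×ˢ B) p q ≤ crossRatio A p.1 q.1 * crossRatio B p.2 q.2 := by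
  have hF₁ := hAo.one_le_crossRatioFwd (p := p.1) hq.1
  have hF₂ := hBo.one_le_crossRatioFwd (p := p.2) hq.2
  have hG₁ := hAo.one_le_crossRatioBwd hp.1 q.1
  have hG₂ := hBo.one_le_crossRatioBwd hp.2 q.2
  have hG := (hAo.prod hBo).one_le_crossRatioBwd hp q
  rw [exitTime_prod hAc hBc hp] at hG
  rw [crossRatio, crossRatio, crossRatio, exitTime_prod hAc hBc hp, exitTime_prod hAc hBc hp,
    mul_mul_mul_comm]
  exact mul_le_mul (apply_min_le_mul hF₁ hF₂) (apply_min_le_mul hG₁ hG₂) (by linarith)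
    (zero_le_one.trans (one_le_mul_of_one_le_of_one_le hF₁ hF₂))

lemma hilbertDist_prod_le {A : Set V} {B : Set W} (hAo : IsOpen A) (hAc : Convex ℝ A)
    (hBo : IsOpen B) (hBc : Convex ℝ B) {p q : V × W} (hp : p ∈ A ×ˢ B) (hq : q ∈ A ×ˢ B) :
    hilbertDist (A ×ˢ B) p q ≤ hilbertDist A p.1 q.1 + hilbertDist B p.2 q.2 := by
  have hA := hAo.one_le_crossRatio hp.1 hq.1
  have hB := hBo.one_le_crossRatio hp.2 hq.2
  rw [hilbertDist_eq_half_log_crossRatio hp, hilbertDist_eq_half_log_crossRatio hp.1,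
    hilbertDist_eq_half_log_crossRatio hp.2, ← mul_add,
    ← Real.log_mul (by positivity) (by positivity)]
  gcongr
  · exact zero_lt_one.trans_le ((hAo.prod hBo).one_le_crossRatio hp hq)
  · exact crossRatio_prod_le hAo hAc hBo hBc hp hq

end

end

theorem prod_hilbertBall_subset_general {n m : ℕ}
    (A : Set (EuclideanSpace ℝ (Fin n))) (B : Set (EuclideanSpace ℝ (Fin m)))
    (hAo : IsOpen A) (hAc : Convex ℝ A)
    (hBo : IsOpen B) (hBc : Convex ℝ B)
    (p : EuclideanSpace ℝ (Fin n) × EuclideanSpace ℝ (Fin m))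
    (hp : p ∈ A ×ˢ B) (R : ℝ) (ε : ℝ) :
    hilbertBall A p.1 (ε * R) ×ˢ hilbertBall B p.2 ((1 - ε) * R) ⊆
      hilbertBall (A ×ˢ B) p R := by
  rintro q ⟨⟨hq₁, hd₁⟩, hq₂, hd₂⟩
  refine ⟨⟨hq₁, hq₂⟩, ?_⟩
  calc hilbertDist (A ×ˢ B) p q ≤ hilbertDist A p.1 q.1 + hilbertDist B p.2 q.2 :=
        hilbertDist_prod_le hAo hAc hBo hBc hp ⟨hq₁, hq₂⟩
    _ < ε * R + (1 - ε) * R := add_lt_add hd₁ hd₂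
    _ = R := by ring

/-- `B_A(p₁, εR) × B_B(p₂, (1-ε)R) ⊆ B_{A×B}(p, R)` for `ε ∈ (0,1)`. -/
theorem prod_hilbertBall_subset {n m : ℕ}
    (A : Set (EuclideanSpace ℝ (Fin n))) (B : Set (EuclideanSpace ℝ (Fin m)))
    (hAo : IsOpen A) (hAc : Convex ℝ A) (hAl : LineFree A)
    (hBo : IsOpen B) (hBc : Convex ℝ B) (hBl : LineFree B)
    (p : EuclideanSpace ℝ (Fin n) × EuclideanSpace ℝ (Fin m))
    (hp : p ∈ A ×ˢ B) (R : ℝ) (hR : 0 < R) (ε : ℝ) (hε : ε ∈ Set.Ioo (0 : ℝ) 1) :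
    hilbertBall A p.1 (ε * R) ×ˢ hilbertBall B p.2 ((1 - ε) * R) ⊆
      hilbertBall (A ×ˢ B) p R :=
  prod_hilbertBall_subset_general A B hAo hAc hBo hBc p hp R ε
end
end

section
/- Let S = (0,∞)^n be the open positive orthant in R^n with its Hilbert–Finsler norm. For every x = (x₁,…,x_n) ∈ S, the Lebesgue volume of the tangent unit ball T_xB(1) = {v : F_S(x,v) < 1} satisfies (4^n/n!) Π_{i=1}^n xᵢ ≤ Leb(T_xB(1)) ≤ 4^n Π_{i=1}^n xᵢ. -/
open scoped ENNReal
open MeasureTheory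

noncomputable section

/-- The open positive orthant `(0,∞)ⁿ`. -/
def orthant (n : ℕ) : Set (EuclideanSpace ℝ (Fin n)) :=
  {x | ∀ i, 0 < x i}

/-! The orthant is the intersection of the half-spaces `{yᵢ > 0}`, so the exit time from `x` in
direction `v` is the least of the exit times `xᵢ / max (-vᵢ) 0` of the coordinate half-lines,
and its inverse lies between each `max (-vᵢ) 0 / xᵢ` and their sum. Hence
`|vᵢ| / (2xᵢ) ≤ F(x, v) ≤ ∑ᵢ |vᵢ| / (2xᵢ)`: the Finsler unit ball is squeezed between the
cross-polytope with half-axes `2xᵢ`, of volume `(4ⁿ/n!) ∏ xᵢ`, and the box `∏ᵢ (-2xᵢ, 2xᵢ)`,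
of volume `4ⁿ ∏ xᵢ`. -/

section ExitTime

variable {V : Type*} [AddCommGroup V] [Module ℝ V] {A : Set V} {p v : V} {s : ℝ}

theorem ofReal_le_inv_exitTime (h : ∀ t, 0 < t → p + t • v ∈ A → t * s ≤ 1) :
    ENNReal.ofReal s ≤ (exitTime A p v)⁻¹ := by
  rw [ENNReal.le_inv_iff_le_inv]
  refine iSup₂_le fun t ⟨ht, hmem⟩ => ?_
  rcases le_or_gt s 0 with hs | hs
  · simp [ENNReal.ofReal_of_nonpos hs]
  · rw [← ENNReal.ofReal_inv_of_pos hs, ← one_div]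
    exact ENNReal.ofReal_le_ofReal ((le_div_iff₀ hs).2 (h t ht hmem))

theorem inv_exitTime_le_ofReal (hs : 0 ≤ s) (h : ∀ t, 0 < t → t * s < 1 → p + t • v ∈ A) :
    (exitTime A p v)⁻¹ ≤ ENNReal.ofReal s := by
  refine ENNReal.le_of_forall_pos_le_add fun ε hε _ => ?_
  have hsε : 0 < s + ε := by positivity
  have hmem : p + (s + ε)⁻¹ • v ∈ A :=
    h _ (inv_pos.2 hsε) ((inv_mul_lt_one₀ hsε).2 (lt_add_of_pos_right s hε))
  have hle : ENNReal.ofReal (s + ε)⁻¹ ≤ exitTime A p v :=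
    le_iSup₂ (f := fun t (_ : t ∈ {t : ℝ | 0 < t ∧ p + t • v ∈ A}) => ENNReal.ofReal t)
      _ ⟨inv_pos.2 hsε, hmem⟩
  calc (exitTime A p v)⁻¹ ≤ (ENNReal.ofReal (s + ε)⁻¹)⁻¹ := ENNReal.inv_le_inv.2 hle
    _ = ENNReal.ofReal s + ε := by
      rw [ENNReal.ofReal_inv_of_pos hsε, inv_inv, ENNReal.ofReal_add hs ε.coe_nonneg,
        ENNReal.ofReal_coe_nnreal]

theorem finsler_neg (A : Set V) (p v : V) : finsler A p (-v) = finsler A p v := by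
  rw [finsler, finsler, neg_neg, add_comm]

end ExitTime

section Orthant

variable {n : ℕ} {x v : EuclideanSpace ℝ (Fin n)}

theorem ofReal_neg_div_le_inv_exitTime_orthant (hx : x ∈ orthant n) (i : Fin n) :
    ENNReal.ofReal (-v i / x i) ≤ (exitTime (orthant n) x v)⁻¹ := by
  refine ofReal_le_inv_exitTime fun t _ hmem => ?_
  have hpos : 0 < x i + t * v i := by simpa using hmem i
  rw [← mul_div_assoc, div_le_one (hx i)]
  linarith

theorem inv_exitTime_orthant_le (hx : x ∈ orthant n) :
    (exitTime (orthant n) x v)⁻¹ ≤ ENNReal.ofReal (∑ i, max (-v i) 0 / x i) := by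
  have hterm (i : Fin n) : 0 ≤ max (-v i) 0 / x i := div_nonneg (le_max_right _ _) (hx i).le
  refine inv_exitTime_le_ofReal (Finset.sum_nonneg fun i _ => hterm i) fun t ht hts i => ?_
  set S := ∑ j, max (-v j) 0 / x j
  have hle : -v i ≤ S * x i :=
    (le_max_left _ _).trans <|
      (div_le_iff₀ (hx i)).1 (Finset.single_le_sum (fun j _ => hterm j) (Finset.mem_univ i))
  have hdrop : t * -v i ≤ t * S * x i := by nlinarith
  have hlt : t * S * x i < x i := by nlinarith [hx i]
  simp only [PiLp.add_apply, PiLp.smul_apply, smul_eq_mul]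
  linarith

theorem inv_exitTime_orthant_ne_top (hx : x ∈ orthant n) : (exitTime (orthant n) x v)⁻¹ ≠ ∞ :=
  ne_top_of_le_ne_top ENNReal.ofReal_ne_top (inv_exitTime_orthant_le hx)

theorem finsler_orthant_le_sum (hx : x ∈ orthant n) :
    finsler (orthant n) x v ≤ ∑ i, |v i| / (2 * x i) := by
  have hsplit : ∑ i, |v i| / (2 * x i) =
      (∑ i, max (-v i) 0 / x i + ∑ i, max (-(-v) i) 0 / x i) / 2 := by
    rw [← Finset.sum_add_distrib, Finset.sum_div]
    refine Finset.sum_congr rfl fun i _ => ?_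
    rw [PiLp.neg_apply, neg_neg, ← add_div, add_comm, max_zero_add_max_neg_zero_eq_abs_self,
      div_div, mul_comm]
  have hnonneg (w : EuclideanSpace ℝ (Fin n)) : 0 ≤ ∑ i, max (-w i) 0 / x i :=
    Finset.sum_nonneg fun i _ => div_nonneg (le_max_right _ _) (hx i).le
  rw [finsler, hsplit]
  gcongr
  refine ENNReal.toReal_le_of_le_ofReal (by linarith [hnonneg v, hnonneg (-v)]) ?_
  rw [ENNReal.ofReal_add (hnonneg v) (hnonneg (-v))]
  exact add_le_add (inv_exitTime_orthant_le hx) (inv_exitTime_orthant_le hx)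

theorem neg_div_le_two_mul_finsler_orthant (hx : x ∈ orthant n) (i : Fin n) :
    -v i / x i ≤ 2 * finsler (orthant n) x v := by
  have hfin : (exitTime (orthant n) x v)⁻¹ + (exitTime (orthant n) x (-v))⁻¹ ≠ ∞ :=
    ENNReal.add_ne_top.2 ⟨inv_exitTime_orthant_ne_top hx, inv_exitTime_orthant_ne_top hx⟩
  rw [finsler, mul_div_cancel₀ _ two_ne_zero, ← ENNReal.ofReal_le_iff_le_toReal hfin]
  exact (ofReal_neg_div_le_inv_exitTime_orthant hx i).trans le_self_add

theorem abs_div_le_finsler_orthant (hx : x ∈ orthant n) (i : Fin n) :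
    |v i| / (2 * x i) ≤ finsler (orthant n) x v := by
  have hneg := neg_div_le_two_mul_finsler_orthant (v := v) hx i
  have hpos := neg_div_le_two_mul_finsler_orthant (v := -v) hx i
  rw [finsler_neg, PiLp.neg_apply, neg_neg] at hpos
  rw [div_le_iff₀ (hx i)] at hneg hpos
  rw [div_le_iff₀ (mul_pos two_pos (hx i))]
  exact abs_le.2 ⟨by linarith, by linarith⟩

end Orthant

section Volume

variable {ι : Type*} [Fintype ι]

theorem volume_setOf_forall_abs_lt {r : ι → ℝ} (hr : ∀ i, 0 ≤ r i) :
    volume {v : EuclideanSpace ℝ ι | ∀ i, |v i| < r i} =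
      ENNReal.ofReal (2 ^ Fintype.card ι * ∏ i, r i) := by
  have hbox : {v : EuclideanSpace ℝ ι | ∀ i, |v i| < r i} =
      WithLp.ofLp ⁻¹' Set.univ.pi fun i => Set.Ioo (-r i) (r i) := by
    ext v
    simp [abs_lt]
  rw [hbox, (PiLp.volume_preserving_ofLp ι).measure_preimage
    (MeasurableSet.univ_pi fun i => measurableSet_Ioo).nullMeasurableSet, volume_pi_pi]
  simp_rw [Real.volume_Ioo, sub_neg_eq_add, ← two_mul]
  rw [← ENNReal.ofReal_prod_of_nonneg fun i _ => mul_nonneg zero_le_two (hr i),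
    Finset.prod_mul_distrib, Finset.prod_const, Finset.card_univ]

theorem volume_setOf_sum_abs_lt_one :
    volume {u : ι → ℝ | ∑ i, |u i| < 1} =
      ENNReal.ofReal (2 ^ Fintype.card ι / (Fintype.card ι).factorial) := by
  have h := volume_sum_rpow_lt_one ι (le_refl (1 : ℝ))
  simp only [Real.rpow_one, div_one] at h
  rw [h, one_add_one_eq_two, Real.Gamma_two, mul_one, Real.Gamma_nat_eq_factorial]

theorem volume_setOf_sum_abs_div_lt_one {r : ι → ℝ} (hr : ∀ i, 0 < r i) :
    volume {v : EuclideanSpace ℝ ι | ∑ i, |v i| / r i < 1} =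
      ENNReal.ofReal (2 ^ Fintype.card ι / (Fintype.card ι).factorial * ∏ i, r i) := by
  classical
  let g : (ι → ℝ) →ₗ[ℝ] ι → ℝ := Matrix.toLin' (Matrix.diagonal fun i => (r i)⁻¹)
  have hdet : LinearMap.det g = ∏ i, (r i)⁻¹ := by
    rw [LinearMap.det_toLin', Matrix.det_diagonal]
  have hdet0 : LinearMap.det g ≠ 0 := by
    rw [hdet]
    exact Finset.prod_ne_zero_iff.2 fun i _ => inv_ne_zero (hr i).ne'
  have hpre : {v : EuclideanSpace ℝ ι | ∑ i, |v i| / r i < 1} =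
      WithLp.ofLp ⁻¹' (g ⁻¹' {u | ∑ i, |u i| < 1}) := by
    ext v
    simp [g, Matrix.mulVec_diagonal, abs_mul, abs_of_pos (hr _), div_eq_inv_mul]
  have hmeas : MeasurableSet (g ⁻¹' {u : ι → ℝ | ∑ i, |u i| < 1}) :=
    (measurableSet_lt (by fun_prop) measurable_const).preimage
      g.continuous_of_finiteDimensional.measurable
  rw [hpre, (PiLp.volume_preserving_ofLp ι).measure_preimage hmeas.nullMeasurableSet,
    Measure.addHaar_preimage_linearMap volume hdet0, volume_setOf_sum_abs_lt_one, hdet,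
    Finset.prod_inv_distrib, inv_inv, abs_of_pos (Finset.prod_pos fun i _ => hr i),
    ← ENNReal.ofReal_mul (Finset.prod_nonneg fun i _ => (hr i).le), mul_comm]

end Volume

/-- `(4ⁿ/n!) Π xᵢ ≤ Leb(T_xB(1)) ≤ 4ⁿ Π xᵢ` for the positive orthant. -/
theorem orthant_unit_ball_volume {n : ℕ} (x : EuclideanSpace ℝ (Fin n))
    (hx : x ∈ orthant n) :
    4 ^ n / (Nat.factorial n : ℝ) * ∏ i, x i ≤
        (volume {v : EuclideanSpace ℝ (Fin n) | finsler (orthant n) x v < 1}).toReal ∧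
      (volume {v : EuclideanSpace ℝ (Fin n) | finsler (orthant n) x v < 1}).toReal ≤
        4 ^ n * ∏ i, x i := by
  have h2x (i : Fin n) : 0 < 2 * x i := mul_pos two_pos (hx i)
  have hcross : {v : EuclideanSpace ℝ (Fin n) | ∑ i, |v i| / (2 * x i) < 1} ⊆
      {v | finsler (orthant n) x v < 1} := fun v hv => (finsler_orthant_le_sum hx).trans_lt hv
  have hbox : {v | finsler (orthant n) x v < 1} ⊆
      {v : EuclideanSpace ℝ (Fin n) | ∀ i, |v i| < 2 * x i} :=
    fun v hv i => (div_lt_one (h2x i)).1 ((abs_div_le_finsler_orthant hx i).trans_lt hv)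
  have hlow := measure_mono (μ := volume) hcross
  have hupp := measure_mono (μ := volume) hbox
  have hprod : ∏ i, 2 * x i = 2 ^ n * ∏ i, x i := by
    simp [Finset.prod_mul_distrib]
  have hfour : (4 : ℝ) ^ n = 2 ^ n * 2 ^ n := by rw [← mul_pow]; norm_num
  rw [volume_setOf_sum_abs_div_lt_one h2x, Fintype.card_fin, hprod] at hlow
  rw [volume_setOf_forall_abs_lt fun i => (h2x i).le, Fintype.card_fin, hprod] at hupp
  constructor
  · have hfin := ne_top_of_le_ne_top ENNReal.ofReal_ne_top hupp
    refine (ENNReal.ofReal_le_iff_le_toReal hfin).1 ?_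
    convert hlow using 2
    rw [hfour]; ring
  · refine ENNReal.toReal_le_of_le_ofReal
      (mul_nonneg (by positivity) (Finset.prod_nonneg fun i _ => (hx i).le)) ?_
    convert hupp using 2
    rw [hfour]; ring
end
end
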